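/- Let 𝓛 be the lamplighter group, F̃_n = {(t, K) ∈ 𝓛 : t ∈ [0,n]∩ℤ and K ⊆ [0,n]∩ℤ}, and define l : ℕ → ℕ by l(1) = 1 and l(n) = 3^{l(n−1)} for n ≥ 2. Then the subsequence (F̃_{l(n)}) is tempered: there exists a constant C > 0 such that for all n ≥ 2, |⋃_{i=1}^{n−1} F̃_{l(n)} · (F̃_{l(i)})⁻¹| ≤ C · |F̃_{l(n)}|. -/

import Mathlib

open scoped symmDiff

/-- The lamplighter group `ℤ ≀ ℤ₂`, realized as pairs `(t, K)` with `t ∈ ℤ` the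
position of the lamplighter and `K` a finite set of integers (the lamps turned on). -/
structure Lamp where
  pos : ℤ
  lamps : Finset ℤ
deriving DecidableEq

namespace Lamp

/-- The shift `t + K` of a finite set of integers. -/
def shift (t : ℤ) (K : Finset ℤ) : Finset ℤ := K.image (t + ·)

lemma mem_shift {t x : ℤ} {K : Finset ℤ} : x ∈ shift t K ↔ x - t ∈ K := by
  constructor
  · rintro h
    simp only [shift, Finset.mem_image] at h
    obtain ⟨k, hk, rfl⟩ := h
    simpa using hk
  · intro h
    simp only [shift, Finset.mem_image]
    exact ⟨x - t, h, by ring⟩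

lemma shift_symmDiff (t : ℤ) (A B : Finset ℤ) :
    shift t (A ∆ B) = shift t A ∆ shift t B := by
  ext x
  simp [mem_shift, Finset.mem_symmDiff]

lemma shift_shift (s t : ℤ) (K : Finset ℤ) : shift s (shift t K) = shift (s + t) K := by
  ext x
  simp [mem_shift, sub_sub]

lemma shift_zero (K : Finset ℤ) : shift 0 K = K := by
  ext x; simp [mem_shift]

lemma shift_empty (t : ℤ) : shift t (∅ : Finset ℤ) = ∅ := by
  simp [shift]

lemma empty_symmDiff (A : Finset ℤ) : (∅ : Finset ℤ) ∆ A = A := by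
  ext x; simp [Finset.mem_symmDiff]

lemma symmDiff_empty (A : Finset ℤ) : A ∆ (∅ : Finset ℤ) = A := by
  ext x; simp [Finset.mem_symmDiff]

lemma symmDiff_self' (A : Finset ℤ) : A ∆ A = (∅ : Finset ℤ) := by
  ext x; simp [Finset.mem_symmDiff]

instance : Mul Lamp := ⟨fun a b => ⟨a.pos + b.pos, a.lamps ∆ shift a.pos b.lamps⟩⟩
instance : One Lamp := ⟨⟨0, ∅⟩⟩
instance : Inv Lamp := ⟨fun a => ⟨-a.pos, shift (-a.pos) a.lamps⟩⟩

@[simp] lemma mul_pos' (a b : Lamp) : (a * b).pos = a.pos + b.pos := rfl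
@[simp] lemma mul_lamps (a b : Lamp) : (a * b).lamps = a.lamps ∆ shift a.pos b.lamps := rfl
@[simp] lemma one_pos' : (1 : Lamp).pos = 0 := rfl
@[simp] lemma one_lamps : (1 : Lamp).lamps = ∅ := rfl
@[simp] lemma inv_pos' (a : Lamp) : a⁻¹.pos = -a.pos := rfl
@[simp] lemma inv_lamps (a : Lamp) : a⁻¹.lamps = shift (-a.pos) a.lamps := rfl

@[ext] lemma ext' {a b : Lamp} (h1 : a.pos = b.pos) (h2 : a.lamps = b.lamps) : a = b := by
  cases a; cases b; simp_all

instance : Group Lamp where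
  mul_assoc a b c := by
    refine ext' ?_ ?_
    · simp [add_assoc]
    · simp [shift_symmDiff, shift_shift, symmDiff_assoc]
  one_mul a := by
    refine ext' ?_ ?_
    · simp
    · rw [mul_lamps, one_lamps, one_pos', shift_zero, empty_symmDiff]
  mul_one a := by
    refine ext' ?_ ?_
    · simp
    · rw [mul_lamps, one_lamps, shift_empty, symmDiff_empty]
  inv_mul_cancel a := by
    refine ext' ?_ ?_
    · simp
    · rw [mul_lamps, inv_lamps, inv_pos', symmDiff_self', one_lamps]

/-- The standard right Følner sets `F̃ n` of the lamplighter group. -/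
def Ftilde (n : ℕ) : Set Lamp :=
  {x | x.pos ∈ Set.Icc (0 : ℤ) n ∧ ∀ k ∈ x.lamps, k ∈ Set.Icc (0 : ℤ) n}

end Lamp

open Pointwise

/-!
An element of `F̃ m · (F̃ j)⁻¹` with `j ≤ k` has some position `t ∈ [-k, m]` and its lamps in
`[0, m] ∪ [t, t + k]`. For `t ∈ [0, m - k]` it already lies in `F̃ m`; the remaining `2k` positions
contribute at most `2k · 2^(m + k + 2)` elements. Since `l i ≤ l (n - 1) = k` for `i < n` and
`m = l n = 3 ^ k`, this is at most `8 m · 2^(m + 1)`, a bounded multiple of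
`|F̃ m| = (m + 1) · 2^(m + 1)`.
-/

lemma add_two_mul_two_pow_le_two_mul_three_pow (k : ℕ) : (k + 2) * 2 ^ k ≤ 2 * 3 ^ k := by
  induction k with
  | zero => norm_num
  | succ k ih =>
    have : 2 ^ k ≤ 3 ^ k := Nat.pow_le_pow_left (by norm_num) k
    rw [pow_succ, pow_succ]
    nlinarith

namespace Lamp

open Finset

lemma mul_inv_pos (a b : Lamp) : (a * b⁻¹).pos = a.pos - b.pos := by
  simp [sub_eq_add_neg]

lemma mul_inv_lamps (a b : Lamp) :
    (a * b⁻¹).lamps = a.lamps ∆ shift (a.pos - b.pos) b.lamps := by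
  simp [shift_shift, sub_eq_add_neg]

def boundedLamps (T : Finset ℤ) (A : ℤ → Finset ℤ) : Finset Lamp :=
  T.biUnion fun t => (A t).powerset.image (Lamp.mk t)

lemma mem_boundedLamps {T : Finset ℤ} {A : ℤ → Finset ℤ} {x : Lamp} :
    x ∈ boundedLamps T A ↔ x.pos ∈ T ∧ x.lamps ⊆ A x.pos := by
  simp only [boundedLamps, mem_biUnion, mem_image, mem_powerset]
  constructor
  · rintro ⟨t, ht, K, hK, rfl⟩
    exact ⟨ht, hK⟩
  · rintro ⟨ht, hK⟩
    exact ⟨x.pos, ht, x.lamps, hK, rfl⟩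

lemma card_boundedLamps (T : Finset ℤ) (A : ℤ → Finset ℤ) :
    #(boundedLamps T A) = ∑ t ∈ T, 2 ^ #(A t) := by
  rw [boundedLamps, card_biUnion]
  · refine sum_congr rfl fun t _ => ?_
    rw [card_image_of_injective _ fun K K' h => (Lamp.mk.inj h).2, card_powerset]
  · intro s _ t _ hst
    simp only [Function.onFun, disjoint_left, mem_image]
    rintro _ ⟨K, -, rfl⟩ ⟨K', -, h⟩
    exact hst (Lamp.mk.inj h).1.symm

lemma Ftilde_eq_boundedLamps (n : ℕ) :
    Ftilde n = ↑(boundedLamps (Icc 0 n) fun _ => Icc 0 n) := by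
  ext x
  simp only [Ftilde, Set.mem_ofPred_eq, mem_coe, mem_boundedLamps, Set.mem_Icc, mem_Icc,
    subset_iff]

lemma ncard_Ftilde (n : ℕ) : (Ftilde n).ncard = (n + 1) * 2 ^ (n + 1) := by
  rw [Ftilde_eq_boundedLamps, Set.ncard_coe_finset, card_boundedLamps, sum_const,
    Int.card_Icc, smul_eq_mul]
  simp only [sub_zero]
  norm_cast

/-- Elements at a position `t ∈ [-k, m]` where the window `[t, t + k]` sticks out of `[0, m]`. -/
noncomputable def overhang (m k : ℕ) : Finset Lamp :=
  boundedLamps (Icc (-k) (-1) ∪ Icc (m - k + 1) m) fun t => Icc 0 m ∪ Icc t (t + k)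

lemma mul_inv_mem_Ftilde_union {m j k : ℕ} (hj : j ≤ k) {a b : Lamp} (ha : a ∈ Ftilde m)
    (hb : b ∈ Ftilde j) : a * b⁻¹ ∈ Ftilde m ∪ ↑(overhang m k) := by
  obtain ⟨ha, ha'⟩ := ha
  obtain ⟨hb, hb'⟩ := hb
  simp only [Set.mem_Icc] at ha ha' hb hb'
  have hlamps : ∀ x ∈ (a * b⁻¹).lamps,
      x ∈ Icc (0 : ℤ) m ∨ x ∈ Icc (a.pos - b.pos) (a.pos - b.pos + j) := by
    intro x hx
    rw [mul_inv_lamps, mem_symmDiff] at hx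
    rcases hx with ⟨hx, -⟩ | ⟨hx, -⟩
    · exact .inl (mem_Icc.2 (ha' x hx))
    · have := hb' _ (mem_shift.1 hx)
      right; rw [mem_Icc]; omega
  by_cases ht : 0 ≤ a.pos - b.pos ∧ a.pos - b.pos ≤ m - k
  · left
    refine ⟨by rw [mul_inv_pos, Set.mem_Icc]; omega, fun x hx => ?_⟩
    rcases hlamps x hx with h | h <;> rw [mem_Icc] at h <;> rw [Set.mem_Icc] <;> omega
  · right
    rw [mem_coe, overhang, mem_boundedLamps, mul_inv_pos]
    refine ⟨?_, fun x hx => ?_⟩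
    · simp only [mem_union, mem_Icc]; omega
    · simp only [mem_union, mem_Icc] at hlamps ⊢
      have := hlamps x hx
      omega

lemma card_overhang_le (m k : ℕ) : #(overhang m k) ≤
      2 * k * 2 ^ (m + k + 2) := by
  have hT : #(Icc (-k : ℤ) (-1) ∪ Icc (m - k + 1 : ℤ) m) ≤ 2 * k := by
    refine (card_union_le _ _).trans ?_
    simp only [Int.card_Icc]
    omega
  have hA : ∀ t : ℤ, #(Icc 0 (m : ℤ) ∪ Icc t (t + k)) ≤ m + k + 2 := fun t => by
    refine (card_union_le _ _).trans ?_
    simp only [Int.card_Icc]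
    omega
  rw [overhang, card_boundedLamps]
  calc _ ≤ #(Icc (-k : ℤ) (-1) ∪ Icc (m - k + 1 : ℤ) m) • 2 ^ (m + k + 2) :=
        sum_le_card_nsmul _ _ _ fun t _ => Nat.pow_le_pow_right two_pos (hA t)
    _ ≤ _ := Nat.mul_le_mul_right _ hT

lemma ncard_biUnion_mul_inv_Ftilde_le {ι : Type*} (s : Finset ι) (f : ι → ℕ) {m k : ℕ}
    (hf : ∀ i ∈ s, f i ≤ k) :
    (⋃ i ∈ s, Ftilde m * (Ftilde (f i))⁻¹).ncard ≤
      (m + 1) * 2 ^ (m + 1) + 2 * k * 2 ^ (m + k + 2) := by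
  have hsub : (⋃ i ∈ s, Ftilde m * (Ftilde (f i))⁻¹) ⊆ Ftilde m ∪ ↑(overhang m k) := by
    simp only [Set.iUnion_subset_iff]
    rintro i hi _ ⟨a, ha, b, hb, rfl⟩
    rw [← inv_inv b]
    exact mul_inv_mem_Ftilde_union (hf i hi) ha hb
  have hfin : (Ftilde m ∪ ↑(overhang m k)).Finite := by
    rw [Ftilde_eq_boundedLamps]
    exact (Finset.finite_toSet _).union (Finset.finite_toSet _)
  calc _ ≤ (Ftilde m ∪ ↑(overhang m k)).ncard := Set.ncard_le_ncard hsub hfin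
    _ ≤ (Ftilde m).ncard + #(overhang m k) := by
      rw [← Set.ncard_coe_finset (overhang m k)]; exact Set.ncard_union_le _ _
    _ ≤ _ := by rw [ncard_Ftilde]; exact Nat.add_le_add_left (card_overhang_le m k) _

lemma ncard_biUnion_mul_inv_Ftilde_three_pow_le {ι : Type*} (s : Finset ι) (f : ι → ℕ) {k : ℕ}
    (hf : ∀ i ∈ s, f i ≤ k) :
    (⋃ i ∈ s, Ftilde (3 ^ k) * (Ftilde (f i))⁻¹).ncard ≤ 9 * (Ftilde (3 ^ k)).ncard := by
  refine (ncard_biUnion_mul_inv_Ftilde_le s f hf).trans ?_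
  have hk : k * 2 ^ k ≤ 2 * 3 ^ k :=
    (Nat.mul_le_mul_right _ (by omega)).trans (add_two_mul_two_pow_le_two_mul_three_pow k)
  have hW : 2 * k * 2 ^ (3 ^ k + k + 2) ≤ 8 * ((3 ^ k + 1) * 2 ^ (3 ^ k + 1)) :=
    calc 2 * k * 2 ^ (3 ^ k + k + 2) = 4 * (k * 2 ^ k) * 2 ^ (3 ^ k + 1) := by ring
      _ ≤ 4 * (2 * (3 ^ k + 1)) * 2 ^ (3 ^ k + 1) :=
        Nat.mul_le_mul_right _ (Nat.mul_le_mul_left _ (by omega))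
      _ = _ := by ring
  rw [ncard_Ftilde]
  omega

end Lamp

lemma monotoneOn_of_eq_three_pow {l : ℕ → ℕ} (hl : ∀ n ≥ 2, l n = 3 ^ l (n - 1)) :
    MonotoneOn l (Set.Ici 1) :=
  monotoneOn_of_le_succ Set.ordConnected_Ici fun a _ ha _ => by
    rw [Order.succ_eq_add_one, hl (a + 1) (by simp_all), Nat.add_sub_cancel]
    exact (Nat.lt_pow_self (by norm_num)).le

theorem stmt11_general (l : ℕ → ℕ) (hl : ∀ n ≥ 2, l n = 3 ^ l (n - 1)) :
    ∃ C : ℝ, 0 < C ∧ ∀ n ≥ 2,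
      (((⋃ i ∈ Finset.Icc 1 (n - 1),
          Lamp.Ftilde (l n) * (Lamp.Ftilde (l i))⁻¹).ncard : ℝ)) ≤
        C * ((Lamp.Ftilde (l n)).ncard : ℝ) := by
  refine ⟨9, by norm_num, fun n hn => ?_⟩
  have hle : ∀ i ∈ Finset.Icc 1 (n - 1), l i ≤ l (n - 1) := fun i hi => by
    rw [Finset.mem_Icc] at hi
    exact monotoneOn_of_eq_three_pow hl hi.1 (hi.1.trans hi.2 : 1 ≤ n - 1) hi.2
  rw [hl n hn]
  exact_mod_cast Lamp.ncard_biUnion_mul_inv_Ftilde_three_pow_le _ l hle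

/-- With `l 1 = 1` and `l n = 3 ^ l (n-1)` for `n ≥ 2`, the subsequence
`F̃ (l n)` of the standard right Følner sequence of the lamplighter group is
tempered: `|⋃_{i=1}^{n-1} F̃ (l n) · (F̃ (l i))⁻¹| ≤ C · |F̃ (l n)|`. -/
theorem stmt11 (l : ℕ → ℕ) (hl1 : l 1 = 1) (hl : ∀ n ≥ 2, l n = 3 ^ l (n - 1)) :
    ∃ C : ℝ, 0 < C ∧ ∀ n ≥ 2,
      (((⋃ i ∈ Finset.Icc 1 (n - 1),
          Lamp.Ftilde (l n) * (Lamp.Ftilde (l i))⁻¹).ncard : ℝ)) ≤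
        C * ((Lamp.Ftilde (l n)).ncard : ℝ) :=
  stmt11_general l hl
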